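/- Fix an integer ℓ ≥ 2 and a parameter ρ > 0. There exists a constant C = C(ℓ,ρ) such that the following holds for every ρ-balanced multislice M_κ on n points and ℓ colours. Suppose f : M_κ → ℝ is written as f = c + Σ_{j=1}^n Σ_{i=1}^{ℓ−1} c_{ji} x_{ji} (with the variables of the last colour ℓ eliminated) and satisfies E[dist(f,{0,1})²] = ε. Then for all distinct coordinates j_1 ≠ j_2 and every colour i ∈ [ℓ−1], dist(c_{j_1 i} − c_{j_2 i}, {−1,0,1}) ≤ C√ε. -/

import Mathlib

/-!
Let `i₀` be the last colour and `i ≠ i₀`. On the set `A` of `u` with `u j₁ = i₀` and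
`u j₂ = i`, swapping the coordinates `j₁, j₂` changes `f` by exactly `c_{j₁i} - c_{j₂i}`.
Since `dist(a - b, {-1,0,1}) ≤ dist(a, {0,1}) + dist(b, {0,1})` and the swap preserves the
uniform measure, `P(A) · dist(c_{j₁i} - c_{j₂i}, {-1,0,1})² ≤ 4ε`. Double counting gives
`P(A) = κ_{i₀} κ_i / (n(n-1)) ≥ ρ²`, hence the bound with `C = 2/ρ`.
-/

open Finset

noncomputable section

/-- The multislice: vectors in `[ℓ]^n` whose colour counts are given by `κ`. -/
def multislice (ℓ n : ℕ) (κ : Fin ℓ → ℕ) : Finset (Fin n → Fin ℓ) :=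
  Finset.univ.filter fun u => ∀ i, (Finset.univ.filter fun j => u j = i).card = κ i

/-- Expectation with respect to the uniform measure on the multislice. -/
def msExp (ℓ n : ℕ) (κ : Fin ℓ → ℕ) (f : (Fin n → Fin ℓ) → ℝ) : ℝ :=
  (∑ u ∈ multislice ℓ n κ, f u) / ((multislice ℓ n κ).card : ℝ)

/-- The indicator variable `x_{ji}`. -/
def xvar (ℓ n : ℕ) (j : Fin n) (i : Fin ℓ) (u : Fin n → Fin ℓ) : ℝ :=
  if u j = i then 1 else 0

/-- A function on the multislice has degree one if it is of the form
`c + ∑_j ∑_i c_{ji} x_{ji}`. -/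
def degreeOne (ℓ n : ℕ) (κ : Fin ℓ → ℕ) (f : (Fin n → Fin ℓ) → ℝ) : Prop :=
  ∃ (c : ℝ) (coef : Fin n → Fin ℓ → ℝ), ∀ u ∈ multislice ℓ n κ,
    f u = c + ∑ j, ∑ i, coef j i * xvar ℓ n j i u

/-- Distance of a real number to the set `{0,1}`. -/
def dist01 (x : ℝ) : ℝ := min |x| |x - 1|

/-- A function is Boolean on the multislice if it takes values in `{0,1}` there. -/
def booleanOn (ℓ n : ℕ) (κ : Fin ℓ → ℕ) (g : (Fin n → Fin ℓ) → ℝ) : Prop :=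
  ∀ u ∈ multislice ℓ n κ, g u = 0 ∨ g u = 1

/-- A dictator: a function depending on at most one coordinate. -/
def dictator (ℓ n : ℕ) (κ : Fin ℓ → ℕ) (g : (Fin n → Fin ℓ) → ℝ) : Prop :=
  ∃ j : Fin n, ∀ u ∈ multislice ℓ n κ, ∀ v ∈ multislice ℓ n κ, u j = v j → g u = g v

/-- Distance of a real number to the set `{-1, 0, 1}`. -/
def distPM1 (x : ℝ) : ℝ := min |x| (min |x - 1| |x + 1|)

lemma exists_dist01_eq_abs_sub (x : ℝ) : ∃ s : ℝ, (s = 0 ∨ s = 1) ∧ dist01 x = |x - s| := by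
  rcases min_choice |x| |x - 1| with h | h
  · exact ⟨0, Or.inl rfl, by rw [dist01, h, sub_zero]⟩
  · exact ⟨1, Or.inr rfl, by rw [dist01, h]⟩

lemma distPM1_le_abs_sub {x t : ℝ} (ht : t = 0 ∨ t = 1 ∨ t = -1) : distPM1 x ≤ |x - t| := by
  rcases ht with rfl | rfl | rfl
  · simp [distPM1]
  · exact (min_le_right _ _).trans (min_le_left _ _)
  · simp [distPM1]

lemma distPM1_sub_le (a b : ℝ) : distPM1 (a - b) ≤ dist01 a + dist01 b := by
  obtain ⟨s, hs, hsa⟩ := exists_dist01_eq_abs_sub a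
  obtain ⟨t, ht, htb⟩ := exists_dist01_eq_abs_sub b
  calc distPM1 (a - b) ≤ |a - b - (s - t)| := distPM1_le_abs_sub (by
          rcases hs with rfl | rfl <;> rcases ht with rfl | rfl <;> norm_num)
    _ = |(a - s) - (b - t)| := by ring_nf
    _ ≤ |a - s| + |b - t| := abs_sub _ _
    _ = dist01 a + dist01 b := by rw [hsa, htb]

lemma sq_distPM1_sub_le (a b : ℝ) :
    distPM1 (a - b) ^ 2 ≤ 2 * (dist01 a ^ 2 + dist01 b ^ 2) := by
  have h := distPM1_sub_le a b
  have h₀ : 0 ≤ distPM1 (a - b) :=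
    le_min (abs_nonneg _) (le_min (abs_nonneg _) (abs_nonneg _))
  nlinarith [sq_nonneg (dist01 a - dist01 b)]

lemma le_two_div_mul_sqrt_of_sq_mul_sq_le {ρ d ε : ℝ} (hρ : 0 < ρ) (h : ρ ^ 2 * d ^ 2 ≤ 4 * ε) :
    d ≤ 2 / ρ * √ε := by
  have hε : 0 ≤ ε := by nlinarith [sq_nonneg (ρ * d)]
  rw [div_mul_eq_mul_div, le_div_iff₀ hρ]
  calc d * ρ ≤ |d * ρ| := le_abs_self _
    _ ≤ √(2 ^ 2 * ε) := Real.abs_le_sqrt (by linarith)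
    _ = 2 * √ε := by rw [Real.sqrt_mul (by norm_num), Real.sqrt_sq (by norm_num)]

section Multislice

variable {ℓ n : ℕ} {κ : Fin ℓ → ℕ}

lemma mem_multislice {u : Fin n → Fin ℓ} :
    u ∈ multislice ℓ n κ ↔ ∀ i, #{j | u j = i} = κ i := by
  simp [multislice]

lemma multislice_nonempty (hκ : ∑ i, κ i = n) : (multislice ℓ n κ).Nonempty := by
  have hcard : Fintype.card (Fin n) = Fintype.card (Σ i, Fin (κ i)) := by simp [hκ]
  let e : Fin n ≃ Σ i, Fin (κ i) := Fintype.equivOfCardEq hcard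
  refine ⟨fun j => (e j).1, mem_multislice.2 fun i => ?_⟩
  rw [card_equiv e (t := {s | s.1 = i}) (by simp), card_filter, ← univ_sigma_univ, sum_sigma]
  simp [apply_ite card]

lemma comp_perm_mem_multislice_iff (σ : Equiv.Perm (Fin n)) {u : Fin n → Fin ℓ} :
    u ∘ σ ∈ multislice ℓ n κ ↔ u ∈ multislice ℓ n κ := by
  simp only [mem_multislice]
  exact forall_congr' fun i => by rw [card_equiv σ (t := {j | u j = i}) (by simp)]

lemma sum_multislice_comp_perm {M : Type*} [AddCommMonoid M] (σ : Equiv.Perm (Fin n))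
    (g : (Fin n → Fin ℓ) → M) :
    ∑ u ∈ multislice ℓ n κ, g (u ∘ σ) = ∑ u ∈ multislice ℓ n κ, g u := by
  refine sum_nbij' (· ∘ σ) (· ∘ σ.symm) (fun u hu => ?_) (fun u hu => ?_)
    (fun u _ => by ext; simp) (fun u _ => by ext; simp) (fun _ _ => rfl)
  · exact (comp_perm_mem_multislice_iff σ).2 hu
  · exact (comp_perm_mem_multislice_iff σ.symm).2 hu

lemma card_filter_multislice_comp_perm (σ : Equiv.Perm (Fin n))
    (p : (Fin n → Fin ℓ) → Prop) [DecidablePred p] :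
    #{u ∈ multislice ℓ n κ | p (u ∘ σ)} = #{u ∈ multislice ℓ n κ | p u} := by
  simpa only [card_filter] using
    sum_multislice_comp_perm σ (fun u => if p u then (1 : ℕ) else 0)

lemma sum_card_filter_apply_eq_comm (s : Finset (Fin n → Fin ℓ)) (T : Finset (Fin n))
    (b : Fin ℓ) : ∑ j ∈ T, #{u ∈ s | u j = b} = ∑ u ∈ s, #{j ∈ T | u j = b} :=
  (sum_card_bipartiteAbove_eq_sum_card_bipartiteBelow (s := s) (t := T)
    fun (u : Fin n → Fin ℓ) (j : Fin n) => u j = b).symm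

lemma mul_card_filter_apply_eq (j : Fin n) (a : Fin ℓ) :
    n * #{u ∈ multislice ℓ n κ | u j = a} = κ a * #(multislice ℓ n κ) := by
  have hsymm : ∀ j', #{u ∈ multislice ℓ n κ | u j' = a} = #{u ∈ multislice ℓ n κ | u j = a} :=
    fun j' => by
      simpa [Equiv.swap_apply_left] using
        card_filter_multislice_comp_perm (κ := κ) (Equiv.swap j j') (fun u => u j = a)
  calc n * #{u ∈ multislice ℓ n κ | u j = a}
      = ∑ j', #{u ∈ multislice ℓ n κ | u j' = a} := by simp [hsymm]
    _ = ∑ u ∈ multislice ℓ n κ, #{j' | u j' = a} := sum_card_filter_apply_eq_comm _ _ _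
    _ = ∑ _u ∈ multislice ℓ n κ, κ a := sum_congr rfl fun u hu => mem_multislice.1 hu a
    _ = κ a * #(multislice ℓ n κ) := by simp [mul_comm]

lemma mul_card_filter_apply_eq_and_apply_eq {j₁ j₂ : Fin n} (hj : j₁ ≠ j₂) {a b : Fin ℓ}
    (hab : a ≠ b) :
    (n - 1) * #{u ∈ multislice ℓ n κ | u j₁ = a ∧ u j₂ = b}
      = κ b * #{u ∈ multislice ℓ n κ | u j₁ = a} := by
  set s := {u ∈ multislice ℓ n κ | u j₁ = a}
  have hs : ∀ j', #{u ∈ s | u j' = b} = #{u ∈ multislice ℓ n κ | u j₁ = a ∧ u j' = b} :=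
    fun j' => by rw [filter_filter]
  have hsymm : ∀ j' ∈ univ.erase j₁, #{u ∈ s | u j' = b} = #{u ∈ s | u j₂ = b} := by
    intro j' hj'
    rw [hs, hs]
    simpa [Equiv.swap_apply_left, Equiv.swap_apply_of_ne_of_ne hj (ne_of_mem_erase hj').symm]
      using card_filter_multislice_comp_perm (κ := κ) (Equiv.swap j₂ j')
        (fun u => u j₁ = a ∧ u j₂ = b)
  have hcount : ∀ u ∈ s, #{j' ∈ univ.erase j₁ | u j' = b} = κ b := by
    intro u hu
    obtain ⟨huM, hua⟩ := mem_filter.1 hu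
    rw [filter_erase, erase_eq_of_notMem (by simp [hua, hab]), mem_multislice.1 huM b]
  calc (n - 1) * #{u ∈ multislice ℓ n κ | u j₁ = a ∧ u j₂ = b}
      = ∑ j' ∈ univ.erase j₁, #{u ∈ s | u j' = b} := by
        rw [sum_congr rfl hsymm, sum_const, card_erase_of_mem (mem_univ _), hs]; simp
    _ = ∑ u ∈ s, #{j' ∈ univ.erase j₁ | u j' = b} := sum_card_filter_apply_eq_comm _ _ _
    _ = κ b * #s := by rw [sum_congr rfl hcount, sum_const, smul_eq_mul, mul_comm]

lemma sq_mul_card_le_card_filter_apply_eq_and_apply_eq {ρ : ℝ} (hρ : 0 ≤ ρ) {a b : Fin ℓ}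
    (ha : ρ * n ≤ κ a) (hb : ρ * n ≤ κ b) (hab : a ≠ b) {j₁ j₂ : Fin n} (hj : j₁ ≠ j₂) :
    ρ ^ 2 * #(multislice ℓ n κ) ≤ #{u ∈ multislice ℓ n κ | u j₁ = a ∧ u j₂ = b} := by
  have hn : 1 < n := by simpa using Fintype.one_lt_card_iff.2 ⟨j₁, j₂, hj⟩
  have hcount : (n : ℝ) * (n - 1) * #{u ∈ multislice ℓ n κ | u j₁ = a ∧ u j₂ = b}
      = κ a * κ b * #(multislice ℓ n κ) := by
    have h := congrArg (fun k : ℕ => (k : ℝ))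
      (congrArg (n * ·) (mul_card_filter_apply_eq_and_apply_eq (κ := κ) hj hab))
    simp only [Nat.cast_mul, Nat.cast_pred (by omega : 0 < n)] at h
    rw [mul_assoc, h, mul_left_comm, ← Nat.cast_mul, mul_card_filter_apply_eq, Nat.cast_mul]
    ring
  have hnn : (0 : ℝ) < n * (n - 1) := by
    have : (1 : ℝ) < n := by exact_mod_cast hn
    nlinarith
  have hκ : ρ ^ 2 * (n * (n - 1)) ≤ κ a * κ b := by
    have : 0 ≤ ρ * n := by positivity
    nlinarith [mul_le_mul ha hb this (this.trans ha)]
  refine le_of_mul_le_mul_left ?_ hnn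
  rw [hcount]
  nlinarith [(#(multislice ℓ n κ)).cast_nonneg (α := ℝ)]

lemma sum_coef_mul_xvar (coef : Fin n → Fin ℓ → ℝ) (u : Fin n → Fin ℓ) (j : Fin n) :
    ∑ i, coef j i * xvar ℓ n j i u = coef j (u j) := by
  simp [xvar]

lemma apply_comp_swap_sub_apply {f : (Fin n → Fin ℓ) → ℝ} {c : ℝ} {coef : Fin n → Fin ℓ → ℝ}
    (hf : ∀ u ∈ multislice ℓ n κ, f u = c + ∑ j, ∑ i, coef j i * xvar ℓ n j i u)
    {j₁ j₂ : Fin n} (hj : j₁ ≠ j₂) {u : Fin n → Fin ℓ} (hu : u ∈ multislice ℓ n κ) :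
    f (u ∘ Equiv.swap j₁ j₂) - f u
      = coef j₁ (u j₂) + coef j₂ (u j₁) - coef j₁ (u j₁) - coef j₂ (u j₂) := by
  have hoff : ∀ j ∈ univ, j ∉ ({j₁, j₂} : Finset (Fin n)) →
      coef j ((u ∘ Equiv.swap j₁ j₂) j) - coef j (u j) = 0 := by
    intro j _ hj'
    simp only [mem_insert, mem_singleton, not_or] at hj'
    simp [Equiv.swap_apply_of_ne_of_ne hj'.1 hj'.2]
  rw [hf _ ((comp_perm_mem_multislice_iff _).2 hu), hf u hu, add_sub_add_left_eq_sub]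
  simp only [sum_coef_mul_xvar]
  rw [← sum_sub_distrib, ← sum_subset (subset_univ _) hoff, sum_pair hj]
  simp only [Function.comp_apply, Equiv.swap_apply_left, Equiv.swap_apply_right]
  ring

lemma card_mul_sq_distPM1_le {f : (Fin n → Fin ℓ) → ℝ} (σ : Equiv.Perm (Fin n))
    {A : Finset (Fin n → Fin ℓ)} (hA : A ⊆ multislice ℓ n κ) {d : ℝ}
    (hd : ∀ u ∈ A, f (u ∘ σ) - f u = d) :
    #A * distPM1 d ^ 2 ≤ 4 * ∑ u ∈ multislice ℓ n κ, dist01 (f u) ^ 2 :=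
  calc #A * distPM1 d ^ 2 = ∑ u ∈ A, distPM1 (f (u ∘ σ) - f u) ^ 2 := by
        rw [sum_congr rfl fun u hu => by rw [hd u hu], sum_const, nsmul_eq_mul]
    _ ≤ ∑ u ∈ A, 2 * (dist01 (f (u ∘ σ)) ^ 2 + dist01 (f u) ^ 2) :=
        sum_le_sum fun u _ => sq_distPM1_sub_le _ _
    _ ≤ ∑ u ∈ multislice ℓ n κ, 2 * (dist01 (f (u ∘ σ)) ^ 2 + dist01 (f u) ^ 2) :=
        sum_le_sum_of_subset_of_nonneg hA fun _ _ _ => by positivity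
    _ = 4 * ∑ u ∈ multislice ℓ n κ, dist01 (f u) ^ 2 := by
        rw [← mul_sum, sum_add_distrib, sum_multislice_comp_perm σ (fun u => dist01 (f u) ^ 2)]
        ring

end Multislice

/-- If `f = c + ∑_j ∑_{i<ℓ-1} c_{ji} x_{ji}` (variables of the last colour eliminated) is
`ε`-close to Boolean on a `ρ`-balanced multislice, then all the coefficient differences
`c_{j₁i} - c_{j₂i}` are `C√ε`-close to `{-1,0,1}`. -/
theorem coef_differences_near_integers (ℓ : ℕ) (hℓ : 2 ≤ ℓ) (ρ : ℝ) (hρ : 0 < ρ) :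
    ∃ C : ℝ, ∀ n : ℕ, 2 ≤ n → ∀ κ : Fin ℓ → ℕ,
      (∀ i, 0 < κ i) → (∀ i, ρ * n ≤ (κ i : ℝ)) → (∑ i, κ i = n) →
      ∀ (f : (Fin n → Fin ℓ) → ℝ) (c : ℝ) (coef : Fin n → Fin ℓ → ℝ),
      (∀ j, coef j ⟨ℓ - 1, by omega⟩ = 0) →
      (∀ u ∈ multislice ℓ n κ, f u = c + ∑ j, ∑ i, coef j i * xvar ℓ n j i u) →
      ∀ ε : ℝ, msExp ℓ n κ (fun u => dist01 (f u) ^ 2) = ε →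
      ∀ j₁ j₂ : Fin n, j₁ ≠ j₂ → ∀ i : Fin ℓ, (i : ℕ) < ℓ - 1 →
        distPM1 (coef j₁ i - coef j₂ i) ≤ C * Real.sqrt ε := by
  refine ⟨2 / ρ, fun n _ κ _ hκ hκsum f c coef hlast hf ε hε j₁ j₂ hj i hi => ?_⟩
  let i₀ : Fin ℓ := ⟨ℓ - 1, by omega⟩
  have hi₀ : i₀ ≠ i := fun h => by simp [i₀, ← h] at hi
  set A := {u ∈ multislice ℓ n κ | u j₁ = i₀ ∧ u j₂ = i}
  have hdiff : ∀ u ∈ A, f (u ∘ Equiv.swap j₁ j₂) - f u = coef j₁ i - coef j₂ i := by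
    intro u hu
    obtain ⟨huM, hu₁, hu₂⟩ := mem_filter.1 hu
    rw [apply_comp_swap_sub_apply hf hj huM, hu₁, hu₂, hlast j₁, hlast j₂]
    ring
  have hM : (0 : ℝ) < #(multislice ℓ n κ) := by
    exact_mod_cast (multislice_nonempty hκsum).card_pos
  have hsum : ∑ u ∈ multislice ℓ n κ, dist01 (f u) ^ 2 = ε * #(multislice ℓ n κ) := by
    rw [← hε, msExp, div_mul_cancel₀ _ hM.ne']
  have hA := sq_mul_card_le_card_filter_apply_eq_and_apply_eq hρ.le (hκ i₀) (hκ i) hi₀ hj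
  have hswap := card_mul_sq_distPM1_le (Equiv.swap j₁ j₂) (filter_subset _ _) hdiff
  refine le_two_div_mul_sqrt_of_sq_mul_sq_le hρ (le_of_mul_le_mul_right ?_ hM)
  rw [hsum] at hswap
  nlinarith [sq_nonneg (distPM1 (coef j₁ i - coef j₂ i))]
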